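/- arXiv:2305.07071 — 4 statements merged into one kernel-verified Lean document; each statement's English description precedes it below -/
import Mathlib

section
/- Let A ∈ ℝ^{m×M} and b ∈ ℝ^m satisfy the GIS conditions, let q ∈ ℝ^M have positive entries, and assume C(A, b) := {x ∈ Δ_M : Ax = b} is nonempty. Define p^{(0)} := q and p^{(k)} := G(p^{(k−1)}) for k ≥ 1, where G is the GIS update with data A, b (all iterates have positive entries, so this is well defined). Then p^{(k)} converges, as k → ∞, to the unique minimizer of p ↦ KL(p, q) over p ∈ C(A, b). -/
open Filter Topology

/-- Kullback--Leibler divergence of two nonnegative vectors. -/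
noncomputable def KL {ι : Type*} [Fintype ι] (p q : ι → ℝ) : ℝ :=
  ∑ j, (p j * Real.log (p j / q j) - p j + q j)

/-- One GIS (SMART) update with data `A`, `b`:
`G(q)ⱼ = qⱼ · exp(∑ᵢ Aᵢⱼ log(bᵢ/(Aq)ᵢ))`. -/
noncomputable def gisStep {m M : ℕ} (A : Fin m → Fin M → ℝ) (b : Fin m → ℝ)
    (q : Fin M → ℝ) : Fin M → ℝ :=
  fun j => q j * Real.exp (∑ i, A i j * Real.log (b i / ∑ j', A i j' * q j'))


/-- The integrand of the Kullback–Leibler divergence. -/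
noncomputable def klT (t s : ℝ) : ℝ := t * Real.log (t / s) - t + s

lemma klT_self (t : ℝ) : klT t t = 0 := by
  rcases eq_or_ne t 0 with h | h
  · simp [klT, h]
  · simp [klT, div_self h]

lemma klT_zero_left (s : ℝ) : klT 0 s = s := by simp [klT]

lemma klT_nonneg {t s : ℝ} (ht : 0 ≤ t) (hs : 0 < s) : 0 ≤ klT t s := by
  rcases eq_or_lt_of_le ht with h | h
  · simp [klT, ← h]; positivity
  · have h1 : Real.log (s / t) ≤ s / t - 1 := Real.log_le_sub_one_of_pos (by positivity)
    have h2 : Real.log (t / s) = - Real.log (s / t) := by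
      rw [← Real.log_inv]; congr 1; field_simp
    have : t * Real.log (t / s) ≥ t - s := by
      rw [h2]
      nlinarith [mul_le_mul_of_nonneg_left h1 h.le, mul_div_cancel₀ s h.ne']
    unfold klT; nlinarith
lemma klT_pos {t s : ℝ} (ht : 0 ≤ t) (hs : 0 < s) (hne : t ≠ s) : 0 < klT t s := by
  rcases eq_or_lt_of_le ht with h | h
  · simp [klT, ← h]; exact hs
  · have hst : s / t ≠ 1 := by
      intro hh; apply hne; field_simp at hh; linarith
    have h1 : Real.log (s / t) < s / t - 1 := Real.log_lt_sub_one_of_pos (by positivity) hst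
    have h2 : Real.log (t / s) = - Real.log (s / t) := by
      rw [← Real.log_inv]; congr 1; field_simp
    have : t * Real.log (t / s) > t - s := by
      rw [h2]
      nlinarith [mul_lt_mul_of_pos_left h1 h, mul_div_cancel₀ s h.ne']
    unfold klT; nlinarith

lemma klT_anti {t s s' : ℝ} (hs : 0 < s) (hss' : s ≤ s') (hs't : s' ≤ t) :
    klT t s' ≤ klT t s := by
  have ht : 0 < t := lt_of_lt_of_le (lt_of_lt_of_le hs hss') hs't
  have hs' : 0 < s' := lt_of_lt_of_le hs hss'
  -- klT t s - klT t s' = t * log (s'/s) + s - s' ≥ t*(1 - s/s') + s - s' ≥ 0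
  have hlog : Real.log (t / s) - Real.log (t / s') = Real.log (s' / s) := by
    rw [Real.log_div ht.ne' hs.ne', Real.log_div ht.ne' hs'.ne',
      Real.log_div hs'.ne' hs.ne']; ring
  have h1 : 1 - (s' / s)⁻¹ ≤ Real.log (s' / s) :=
    Real.one_sub_inv_le_log_of_pos (by positivity)
  have hinv : (s' / s)⁻¹ = s / s' := by field_simp
  rw [hinv] at h1
  have key : t * (1 - s / s') ≥ s' - s := by
    have : 1 - s / s' = (s' - s) / s' := by field_simp
    rw [this, ge_iff_le, mul_div_assoc', le_div_iff₀ hs']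
    nlinarith [sub_nonneg.2 hss']
  have : t * Real.log (t / s) - t * Real.log (t / s') ≥ s' - s := by
    rw [← mul_sub, hlog]; nlinarith [mul_le_mul_of_nonneg_left h1 ht.le]
  unfold klT; nlinarith

lemma klT_mono {t s s' : ℝ} (ht : 0 < t) (hts : t ≤ s) (hss' : s ≤ s') :
    klT t s ≤ klT t s' := by
  have hs : 0 < s := lt_of_lt_of_le ht hts
  have hs' : 0 < s' := lt_of_lt_of_le hs hss'
  have hlog : Real.log (t / s) - Real.log (t / s') = Real.log (s' / s) := by
    rw [Real.log_div ht.ne' hs.ne', Real.log_div ht.ne' hs'.ne',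
      Real.log_div hs'.ne' hs.ne']; ring
  have h1 : Real.log (s' / s) ≤ s' / s - 1 := Real.log_le_sub_one_of_pos (by positivity)
  have key : t * (s' / s - 1) ≤ s' - s := by
    have : s' / s - 1 = (s' - s) / s := by field_simp
    rw [this, mul_comm, div_mul_eq_mul_div, div_le_iff₀ hs]
    nlinarith [sub_nonneg.2 hss']
  have : t * Real.log (t / s) - t * Real.log (t / s') ≤ s' - s := by
    rw [← mul_sub, hlog]; nlinarith [mul_le_mul_of_nonneg_left h1 ht.le]
  unfold klT; nlinarith

/-- If `klT t (s k) → 0` and `s k > 0`, then `s k → t`. -/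
lemma klT_tendsto {t : ℝ} (ht : 0 ≤ t) {s : ℕ → ℝ} (hs : ∀ k, 0 < s k)
    (h : Tendsto (fun k => klT t (s k)) atTop (𝓝 0)) : Tendsto s atTop (𝓝 t) := by
  rcases eq_or_lt_of_le ht with h0 | ht
  · simpa [← h0, klT_zero_left] using h
  · rw [Metric.tendsto_atTop]
    intro ε hε
    set ε' : ℝ := min ε (t / 2) with hε'def
    have hε' : 0 < ε' := lt_min hε (by linarith)
    have hε'le : ε' ≤ ε := min_le_left _ _
    have hε't : ε' ≤ t / 2 := min_le_right _ _
    have hlo : 0 < t - ε' := by linarith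
    have hδ1 : 0 < klT t (t - ε') := klT_pos ht.le (by linarith) (by intro hh; linarith)
    have hδ2 : 0 < klT t (t + ε') := klT_pos ht.le (by linarith) (by intro hh; linarith)
    set δ := min (klT t (t - ε')) (klT t (t + ε')) with hδdef
    have hδ : 0 < δ := lt_min hδ1 hδ2
    rw [Metric.tendsto_atTop] at h
    obtain ⟨N, hN⟩ := h δ hδ
    refine ⟨N, fun k hk => ?_⟩
    have hkd := hN k hk
    simp only [Real.dist_eq, sub_zero] at hkd
    have hkd : klT t (s k) < δ := by
      have := abs_lt.1 hkd; exact this.2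
    have h1 : t - ε' < s k := by
      by_contra hcon
      push_neg at hcon
      have hle : klT t (t - ε') ≤ klT t (s k) :=
        klT_anti (hs k) hcon (show t - ε' ≤ t by linarith)
      have : δ ≤ klT t (s k) := le_trans (min_le_left _ _) hle
      linarith
    have h2 : s k < t + ε' := by
      by_contra hcon
      push_neg at hcon
      have hle : klT t (t + ε') ≤ klT t (s k) :=
        klT_mono ht (show t ≤ t + ε' by linarith) hcon
      have : δ ≤ klT t (s k) := le_trans (min_le_right _ _) hle
      linarith
    rw [Real.dist_eq, abs_lt]
    constructor <;> [linarith; linarith]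

/-- Continuity of `klT t ·` at positive points, along a filter. -/
lemma klT_tendsto_of_tendsto {t s₀ : ℝ} (hs₀ : 0 < s₀) {l : Filter ℕ} {s : ℕ → ℝ}
    (h : Tendsto s l (𝓝 s₀)) :
    Tendsto (fun k => klT t (s k)) l (𝓝 (klT t s₀)) := by
  rcases eq_or_ne t 0 with rfl | ht
  · simpa [klT_zero_left] using h
  · have hc : ContinuousAt (fun x : ℝ => klT t x) s₀ := by
      have h1 : ContinuousAt (fun x : ℝ => t / x) s₀ := by
        exact continuousAt_const.div continuousAt_id hs₀.ne'
      have h2 : ContinuousAt Real.log (t / s₀) := Real.continuousAt_log (by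
        simp only [ne_eq, div_eq_zero_iff, not_or]; exact ⟨ht, hs₀.ne'⟩)
      have : ContinuousAt (fun x : ℝ => t * Real.log (t / x) - t + x) s₀ :=
        (((continuousAt_const.mul (h2.comp h1)).sub continuousAt_const).add continuousAt_id)
      exact this
    exact hc.tendsto.comp h

lemma KL_eq_klT {ι : Type*} [Fintype ι] (p q : ι → ℝ) : KL p q = ∑ j, klT (p j) (q j) := rfl

/-- The GIS iterates converge to the unique minimizer of `KL(·, q)` over
`C(A, b) = {x ∈ Δ_M : A x = b}`. -/
theorem stmt1 {m M : ℕ} (A : Fin m → Fin M → ℝ) (b : Fin m → ℝ)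
    (hA0 : ∀ i j, 0 ≤ A i j)
    (hArow : ∀ i, ∃ j, A i j ≠ 0)
    (hAcol : ∀ j, ∑ i, A i j = 1)
    (hb0 : ∀ i, 0 < b i)
    (hbsum : ∑ i, b i = 1)
    (q : Fin M → ℝ) (hq : ∀ j, 0 < q j)
    (C : Set (Fin M → ℝ))
    (hC : C = {x : Fin M → ℝ |
      (∀ j, 0 ≤ x j) ∧ (∑ j, x j = 1) ∧ ∀ i, ∑ j, A i j * x j = b i})
    (hCne : C.Nonempty) :
    ∃ pstar ∈ C, (∀ z ∈ C, z ≠ pstar → KL pstar q < KL z q) ∧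
      Tendsto (fun k => (gisStep A b)^[k] q) atTop (𝓝 pstar) := by
  classical
  set P : ℕ → Fin M → ℝ := fun k => (gisStep A b)^[k] q with hPdef
  have hPsucc : ∀ k, P (k + 1) = gisStep A b (P k) := fun k =>
    Function.iterate_succ_apply' (gisStep A b) k q
  -- positivity of iterates
  have hpos : ∀ k j, 0 < P k j := by
    intro k
    induction k with
    | zero => exact hq
    | succ k ih =>
      intro j
      rw [hPsucc k]
      exact mul_pos (ih j) (Real.exp_pos _)
  -- positivity of A * P k
  have hrow : ∀ (x : Fin M → ℝ), (∀ j, 0 < x j) → ∀ i, 0 < ∑ j, A i j * x j := by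
    intro x hx i
    obtain ⟨j0, hj0⟩ := hArow i
    refine Finset.sum_pos' (fun j _ => mul_nonneg (hA0 i j) (hx j).le) ⟨j0, Finset.mem_univ _, ?_⟩
    exact mul_pos (lt_of_le_of_ne (hA0 i j0) (Ne.symm hj0)) (hx j0)
  -- ratio
  set r : ℕ → Fin m → ℝ := fun k i => b i / ∑ j, A i j * P k j with hrdef
  have hrpos : ∀ k i, 0 < r k i := fun k i => div_pos (hb0 i) (hrow _ (hpos k) i)
  -- log identity
  have hlog : ∀ k j, Real.log (P (k + 1) j) =
      Real.log (P k j) + ∑ i, A i j * Real.log (r k i) := by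
    intro k j
    rw [hPsucc k]
    show Real.log (P k j * Real.exp _) = _
    rw [Real.log_mul (hpos k j).ne' (Real.exp_pos _).ne', Real.log_exp]
  -- total masses
  set s : ℕ → ℝ := fun k => ∑ j, P k j with hsdef
  -- sum of A-image
  have hAsum : ∀ (x : Fin M → ℝ), ∑ i, ∑ j, A i j * x j = ∑ j, x j := by
    intro x
    rw [Finset.sum_comm]
    refine Finset.sum_congr rfl fun j _ => ?_
    rw [← Finset.sum_mul, hAcol j, one_mul]
  -- Jensen: s (k+1) ≤ 1
  have hs1 : ∀ k, s (k + 1) ≤ 1 := by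
    intro k
    have hstep : ∀ j, P (k + 1) j ≤ P k j * ∑ i, A i j * r k i := by
      intro j
      rw [hPsucc k]
      show P k j * Real.exp (∑ i, A i j * Real.log (r k i)) ≤ _
      refine mul_le_mul_of_nonneg_left ?_ (hpos k j).le
      have hj := convexOn_exp.map_sum_le (t := Finset.univ)
        (w := fun i => A i j) (p := fun i => Real.log (r k i))
        (fun i _ => hA0 i j) (hAcol j) (fun i _ => Set.mem_univ _)
      calc Real.exp (∑ i, A i j * Real.log (r k i))
          = Real.exp (∑ i, A i j • Real.log (r k i)) := by simp [smul_eq_mul]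
        _ ≤ ∑ i, A i j • Real.exp (Real.log (r k i)) := hj
        _ = ∑ i, A i j * r k i := by
            refine Finset.sum_congr rfl fun i _ => ?_
            rw [smul_eq_mul, Real.exp_log (hrpos k i)]
    calc s (k + 1) ≤ ∑ j, P k j * ∑ i, A i j * r k i :=
          Finset.sum_le_sum fun j _ => hstep j
      _ = ∑ i, r k i * ∑ j, A i j * P k j := by
          simp only [Finset.mul_sum]
          rw [Finset.sum_comm]
          exact Finset.sum_congr rfl fun i _ => Finset.sum_congr rfl fun j _ => by ring
      _ = ∑ i, b i := by
          refine Finset.sum_congr rfl fun i _ => ?_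
          show b i / _ * _ = b i
          exact div_mul_cancel₀ (b i) (hrow _ (hpos k) i).ne'
      _ = 1 := hbsum
  -- one-step decrease identity
  have hkey : ∀ x ∈ C, ∀ k, KL x (P k) - KL x (P (k + 1)) =
      KL b (fun i => ∑ j, A i j * P k j) + (1 - s (k + 1)) := by
    intro x hx k
    rw [hC] at hx
    obtain ⟨hx0, hxsum, hxA⟩ := hx
    have hAPs : ∑ i, (∑ j, A i j * P k j) = s k := hAsum (P k)
    have hKLb : KL b (fun i => ∑ j, A i j * P k j) =
        (∑ i, b i * Real.log (r k i)) - 1 + s k := by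
      unfold KL
      rw [Finset.sum_add_distrib, Finset.sum_sub_distrib, hbsum, hAPs]
    have hL : KL x (P k) - KL x (P (k + 1)) =
        (∑ j, x j * ∑ i, A i j * Real.log (r k i)) + s k - s (k + 1) := by
      unfold KL
      rw [← Finset.sum_sub_distrib]
      have hterm : ∀ j ∈ Finset.univ, (x j * Real.log (x j / P k j) - x j + P k j) -
          (x j * Real.log (x j / P (k + 1) j) - x j + P (k + 1) j)
          = (x j * ∑ i, A i j * Real.log (r k i)) + (P k j - P (k + 1) j) := by
        intro j _
        rcases eq_or_lt_of_le (hx0 j) with h0 | h0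
        · simp [← h0]
        · rw [Real.log_div h0.ne' (hpos k j).ne', Real.log_div h0.ne' (hpos (k + 1) j).ne',
            hlog k j]
          ring
      rw [Finset.sum_congr rfl hterm, Finset.sum_add_distrib, Finset.sum_sub_distrib]
      show _ = _ + s k - s (k + 1)
      ring
    have e2 : ∑ j, x j * ∑ i, A i j * Real.log (r k i) = ∑ i, b i * Real.log (r k i) := by
      simp only [Finset.mul_sum]
      rw [Finset.sum_comm]
      refine Finset.sum_congr rfl fun i _ => ?_
      rw [← hxA i, Finset.sum_mul]
      exact Finset.sum_congr rfl fun j _ => by ring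
    rw [hL, e2, hKLb]
    ring
  -- E and its properties
  set E : ℕ → ℝ := fun k => KL b (fun i => ∑ j, A i j * P k j) with hEdef
  have hEeq : ∀ k, E k = KL b (fun i => ∑ j, A i j * P k j) := fun k => rfl
  have hE0 : ∀ k, 0 ≤ E k := by
    intro k
    rw [hEeq k, KL_eq_klT]
    exact Finset.sum_nonneg fun i _ => klT_nonneg (hb0 i).le (hrow _ (hpos k) i)
  obtain ⟨x₀, hx₀⟩ := hCne
  have hx₀' := hC ▸ hx₀
  have hKLnonneg : ∀ (x : Fin M → ℝ), (∀ j, 0 ≤ x j) → ∀ k, 0 ≤ KL x (P k) := by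
    intro x hx0 k
    rw [KL_eq_klT]
    exact Finset.sum_nonneg fun j _ => klT_nonneg (hx0 j) (hpos k j)
  -- convergence of KL x (P k) for x ∈ C
  have hmono : ∀ x ∈ C, ∃ ℓ, 0 ≤ ℓ ∧ Tendsto (fun k => KL x (P k)) atTop (𝓝 ℓ) := by
    intro x hx
    have hx' := hC ▸ hx
    have hanti : Antitone fun k => KL x (P k) := by
      refine antitone_nat_of_succ_le fun k => ?_
      have h1 := hkey x hx k
      have h2 := hE0 k
      have h3 := hs1 k
      rw [hEdef] at h2
      linarith
    have hbdd : BddBelow (Set.range fun k => KL x (P k)) := by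
      refine ⟨0, fun y hy => ?_⟩
      obtain ⟨k, rfl⟩ := hy
      exact hKLnonneg x hx'.1 k
    refine ⟨⨅ k, KL x (P k), ?_, tendsto_atTop_ciInf hanti hbdd⟩
    exact le_ciInf fun k => hKLnonneg x hx'.1 k
  obtain ⟨ℓ₀, hℓ₀0, hℓ₀⟩ := hmono x₀ hx₀
  -- E k → 0 and s (k+1) → 1
  have hdiff : Tendsto (fun k => KL x₀ (P k) - KL x₀ (P (k + 1))) atTop (𝓝 0) := by
    have h2 : Tendsto (fun k => KL x₀ (P (k + 1))) atTop (𝓝 ℓ₀) :=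
      hℓ₀.comp (tendsto_add_atTop_nat 1)
    simpa using hℓ₀.sub h2
  have hEtend : Tendsto E atTop (𝓝 0) := by
    refine tendsto_of_tendsto_of_tendsto_of_le_of_le tendsto_const_nhds hdiff hE0 fun k => ?_
    have h1 := hkey x₀ hx₀ k
    have h3 := hs1 k
    rw [← hEeq k] at h1
    linarith
  have hstend : Tendsto (fun k => s (k + 1)) atTop (𝓝 1) := by
    have hT : Tendsto (fun k => 1 - s (k + 1)) atTop (𝓝 0) := by
      refine tendsto_of_tendsto_of_tendsto_of_le_of_le tendsto_const_nhds hdiff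
        (fun k => by have := hs1 k; linarith) fun k => ?_
      have h1 := hkey x₀ hx₀ k
      have h2 := hE0 k
      rw [← hEeq k] at h1
      linarith
    have h2 : Tendsto (fun k => (1 : ℝ) - (1 - s (k + 1))) atTop (𝓝 (1 - 0)) :=
      (tendsto_const_nhds (x := (1 : ℝ)) (f := atTop (α := ℕ))).sub hT
    simp only [sub_zero] at h2
    exact h2.congr fun k => by ring
  -- two-point constancy
  have hconst : ∀ x ∈ C, ∀ y ∈ C, ∀ k, KL x (P k) - KL y (P k) = KL x q - KL y q := by
    intro x hx y hy k
    induction k with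
    | zero => rfl
    | succ k ih =>
      have h1 := hkey x hx k
      have h2 := hkey y hy k
      linarith
  -- compact subsequence
  have hQmem : ∀ k, P (k + 1) ∈ Set.Icc (0 : Fin M → ℝ) 1 := by
    intro k
    constructor
    · exact fun j => (hpos _ j).le
    · intro j
      calc P (k + 1) j ≤ s (k + 1) :=
            Finset.single_le_sum (f := fun j => P (k + 1) j)
              (fun j _ => (hpos _ j).le) (Finset.mem_univ j)
        _ ≤ 1 := hs1 k
  obtain ⟨pstar, hpmem, φ, hφ, hφtend⟩ :=
    (isCompact_Icc (a := (0 : Fin M → ℝ)) (b := 1)).tendsto_subseq hQmem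
  have hp0 : ∀ j, 0 ≤ pstar j := fun j => hpmem.1 j
  have hconvj : ∀ j, Tendsto (fun k => P (φ k + 1) j) atTop (𝓝 (pstar j)) := by
    intro j
    exact tendsto_pi_nhds.1 hφtend j
  -- pstar ∈ C
  have hpsum : ∑ j, pstar j = 1 := by
    have h1 : Tendsto (fun k => s (φ k + 1)) atTop (𝓝 (∑ j, pstar j)) :=
      tendsto_finset_sum _ fun j _ => hconvj j
    have h2 : Tendsto (fun k => s (φ k + 1)) atTop (𝓝 1) :=
      hstend.comp hφ.tendsto_atTop
    exact tendsto_nhds_unique h1 h2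
  have hpA : ∀ i, ∑ j, A i j * pstar j = b i := by
    intro i
    have hAt : Tendsto (fun k => ∑ j, A i j * P (φ k + 1) j) atTop
        (𝓝 (∑ j, A i j * pstar j)) :=
      tendsto_finset_sum _ fun j _ => (hconvj j).const_mul _
    have hklT : Tendsto (fun k => klT (b i) (∑ j, A i j * P (φ k + 1) j)) atTop (𝓝 0) := by
      refine tendsto_of_tendsto_of_tendsto_of_le_of_le tendsto_const_nhds
        ((hEtend.comp (tendsto_add_atTop_nat 1)).comp hφ.tendsto_atTop)
        (fun k => klT_nonneg (hb0 i).le (hrow _ (hpos _) i)) fun k => ?_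
      show klT (b i) _ ≤ E (φ k + 1)
      rw [hEeq (φ k + 1), KL_eq_klT]
      exact Finset.single_le_sum
        (f := fun i' => klT (b i') (∑ j, A i' j * P (φ k + 1) j))
        (fun i' _ => klT_nonneg (hb0 i').le (hrow _ (hpos _) i')) (Finset.mem_univ i)
    have := klT_tendsto (hb0 i).le (fun k => hrow _ (hpos (φ k + 1)) i) hklT
    exact tendsto_nhds_unique hAt this
  have hpC : pstar ∈ C := by
    rw [hC]; exact ⟨hp0, hpsum, hpA⟩
  -- KL pstar (P (φ k + 1)) → 0
  have hsub0 : Tendsto (fun k => KL pstar (P (φ k + 1))) atTop (𝓝 0) := by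
    have hterm : ∀ j, Tendsto (fun k => klT (pstar j) (P (φ k + 1) j)) atTop (𝓝 0) := by
      intro j
      rcases eq_or_lt_of_le (hp0 j) with h0 | h0
      · simpa [← h0, klT_zero_left] using hconvj j
      · have := klT_tendsto_of_tendsto (t := pstar j) h0 (hconvj j)
        rwa [klT_self] at this
    have := tendsto_finset_sum Finset.univ fun j (_ : j ∈ Finset.univ) => hterm j
    simp only [KL_eq_klT]
    simpa using this
  -- KL pstar (P k) → 0 and convergence of the iterates
  obtain ⟨ℓ, hℓ0, hℓ⟩ := hmono pstar hpC
  have hℓeq : ℓ = 0 := by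
    have h1 : Tendsto (fun k => KL pstar (P (φ k + 1))) atTop (𝓝 ℓ) :=
      (hℓ.comp (tendsto_add_atTop_nat 1)).comp hφ.tendsto_atTop
    exact tendsto_nhds_unique h1 hsub0
  rw [hℓeq] at hℓ
  have hPj : ∀ j, Tendsto (fun k => P k j) atTop (𝓝 (pstar j)) := by
    intro j
    refine klT_tendsto (hp0 j) (fun k => hpos k j) ?_
    refine tendsto_of_tendsto_of_tendsto_of_le_of_le tendsto_const_nhds hℓ
      (fun k => klT_nonneg (hp0 j) (hpos k j)) fun k => ?_
    rw [KL_eq_klT]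
    exact Finset.single_le_sum (f := fun j' => klT (pstar j') (P k j'))
      (fun j' _ => klT_nonneg (hp0 j') (hpos k j')) (Finset.mem_univ j)
  have hPtend : Tendsto P atTop (𝓝 pstar) := tendsto_pi_nhds.2 hPj
  -- optimality
  refine ⟨pstar, hpC, ?_, hPtend⟩
  intro z hz hzne
  have hz' := hC ▸ hz
  have hzKL : Tendsto (fun k => KL z (P k)) atTop (𝓝 (KL z q - KL pstar q)) := by
    have heq : ∀ k, KL z (P k) = KL pstar (P k) + (KL z q - KL pstar q) := by
      intro k
      have := hconst z hz pstar hpC k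
      linarith
    have : Tendsto (fun k => KL pstar (P k) + (KL z q - KL pstar q)) atTop
        (𝓝 (0 + (KL z q - KL pstar q))) := hℓ.add_const _
    rw [zero_add] at this
    exact this.congr fun k => (heq k).symm
  -- z j > 0 → pstar j > 0
  have hzpos : ∀ j, 0 < z j → 0 < pstar j := by
    intro j hzj
    rcases eq_or_lt_of_le (hp0 j) with h0 | h0
    · exfalso
      have hPj0 : Tendsto (fun k => P k j) atTop (𝓝 0) := h0 ▸ hPj j
      have hlogbot : Tendsto (fun k => Real.log (P k j)) atTop atBot :=
        Real.tendsto_log_nhdsGT_zero.comp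
          (tendsto_nhdsWithin_of_tendsto_nhds_of_eventually_within _ hPj0
            (Eventually.of_forall fun k => hpos k j))
      have hlogTop : Tendsto (fun k => Real.log (z j) - Real.log (P k j)) atTop atTop := by
        have : Tendsto (fun k => -Real.log (P k j)) atTop atTop := tendsto_neg_atBot_atTop.comp hlogbot
        have h2 := tendsto_atTop_add_const_left (f := fun k => -Real.log (P k j))
          atTop (Real.log (z j)) this
        exact h2.congr fun k => by ring
      have hterm : Tendsto (fun k => klT (z j) (P k j)) atTop atTop := by
        have h1 : Tendsto (fun k => z j * (Real.log (z j) - Real.log (P k j))) atTop atTop :=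
          hlogTop.const_mul_atTop hzj
        have h2 : Tendsto (fun k => z j * (Real.log (z j) - Real.log (P k j))
            + (P k j - z j)) atTop atTop := by
          refine tendsto_atTop_add_right_of_le' atTop (-z j) h1 ?_
          exact Eventually.of_forall fun k => by have := hpos k j; linarith
        refine h2.congr fun k => ?_
        unfold klT
        rw [Real.log_div hzj.ne' (hpos k j).ne']
        ring
      have hle : ∀ k, klT (z j) (P k j) ≤ KL z (P k) := by
        intro k
        rw [KL_eq_klT]
        exact Finset.single_le_sum (f := fun j' => klT (z j') (P k j'))
          (fun j' _ => klT_nonneg (hz'.1 j') (hpos k j')) (Finset.mem_univ j)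
      exact not_tendsto_nhds_of_tendsto_atTop (tendsto_atTop_mono hle hterm) _ hzKL
    · exact h0
  -- KL z (P k) → KL z pstar
  have hzlim : Tendsto (fun k => KL z (P k)) atTop (𝓝 (KL z pstar)) := by
    rw [KL_eq_klT (p := z) (q := pstar)]
    have hterm : ∀ j, Tendsto (fun k => klT (z j) (P k j)) atTop (𝓝 (klT (z j) (pstar j))) := by
      intro j
      rcases eq_or_lt_of_le (hz'.1 j) with h0 | h0
      · simpa [← h0, klT_zero_left] using hPj j
      · exact klT_tendsto_of_tendsto (hzpos j h0) (hPj j)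
    have := tendsto_finset_sum Finset.univ fun j (_ : j ∈ Finset.univ) => hterm j
    simp only [KL_eq_klT]
    exact this
  have hceq : KL z q - KL pstar q = KL z pstar := tendsto_nhds_unique hzKL hzlim
  have hKLpos : 0 < KL z pstar := by
    obtain ⟨j0, hj0⟩ : ∃ j0, z j0 ≠ pstar j0 := by
      by_contra hcon
      push_neg at hcon
      exact hzne (funext hcon)
    have hpj0 : 0 < pstar j0 := by
      rcases eq_or_lt_of_le (hz'.1 j0) with h0 | h0
      · rcases eq_or_lt_of_le (hp0 j0) with h1 | h1
        · exact absurd (h1 ▸ h0.symm ▸ rfl) hj0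
        · exact h1
      · exact hzpos j0 h0
    rw [KL_eq_klT]
    refine Finset.sum_pos' (fun j _ => ?_) ⟨j0, Finset.mem_univ j0, ?_⟩
    · rcases eq_or_lt_of_le (hp0 j) with h1 | h1
      · have hzj : z j = 0 := by
          by_contra hzj
          have : 0 < z j := lt_of_le_of_ne (hz'.1 j) (Ne.symm hzj)
          have := hzpos j this
          rw [← h1] at this
          exact lt_irrefl _ this
        rw [hzj, ← h1, klT_zero_left]
      · exact klT_nonneg (hz'.1 j) h1
    · exact klT_pos (hz'.1 j0) hpj0 hj0
  linarith [hceq]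
end

section
/- Let A ∈ ℝ^{m×M} and b ∈ ℝ^m satisfy the GIS conditions, let q ∈ ℝ^M have positive entries, and assume C(A, b) := {x ∈ Δ_M : Ax = b} is nonempty. Define the GIS sequence p^{(0)} := q, p^{(k)} := G(p^{(k−1)}) for k ≥ 1, where G is the GIS update with data A, b. Then for every p ∈ C(A, b): (i) the sequence k ↦ KL(p, p^{(k)}) is nonincreasing (Fejér monotonicity); (ii) Σ_{k=0}^∞ KL(b, A p^{(k)}) ≤ KL(p, q) < ∞; in particular KL(b, A p^{(k)}) → 0 as k → ∞. -/
open Filter Topology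

lemma kl_term_nonneg {x y : ℝ} (hx : 0 ≤ x) (hy : 0 < y) :
    0 ≤ x * Real.log (x / y) - x + y := by
  rcases eq_or_lt_of_le hx with h | h
  · simp [← h]; positivity
  · have h1 : Real.log (y / x) ≤ y / x - 1 := Real.log_le_sub_one_of_pos (by positivity)
    have h2 : Real.log (x / y) = - Real.log (y / x) := by
      rw [← Real.log_inv]; congr 1; field_simp
    have h3 : x * Real.log (y / x) ≤ y - x := by
      have h4 : x * Real.log (y / x) ≤ x * (y / x - 1) :=
        mul_le_mul_of_nonneg_left h1 hx
      have h5 : x * (y / x - 1) = y - x := by field_simp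
      linarith
    rw [h2]; nlinarith

lemma KL_nonneg {ι : Type*} [Fintype ι] (p q : ι → ℝ) (hp : ∀ j, 0 ≤ p j)
    (hq : ∀ j, 0 < q j) : 0 ≤ KL p q :=
  Finset.sum_nonneg fun j _ => kl_term_nonneg (hp j) (hq j)

lemma jensen_exp {ι : Type*} [Fintype ι] (w r : ι → ℝ) (hw : ∀ i, 0 ≤ w i)
    (hw1 : ∑ i, w i = 1) (hr : ∀ i, 0 < r i) :
    Real.exp (∑ i, w i * Real.log (r i)) ≤ ∑ i, w i * r i := by
  have : Real.exp (∑ i, w i * Real.log (r i)) = ∏ i, (r i) ^ (w i) := by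
    rw [Real.exp_sum]
    exact Finset.prod_congr rfl fun i _ => by
      rw [Real.rpow_def_of_pos (hr i), mul_comm]
  rw [this]
  exact Real.geom_mean_le_arith_mean_weighted _ _ _ (fun i _ => hw i) hw1
    (fun i _ => (hr i).le)

lemma s_pos {m M : ℕ} (A : Fin m → Fin M → ℝ) (hA0 : ∀ i j, 0 ≤ A i j)
    (hArow : ∀ i, ∃ j, A i j ≠ 0) (q : Fin M → ℝ) (hq : ∀ j, 0 < q j) (i : Fin m) :
    0 < ∑ j', A i j' * q j' := by
  obtain ⟨j, hj⟩ := hArow i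
  exact Finset.sum_pos' (fun j' _ => mul_nonneg (hA0 i j') (hq j').le)
    ⟨j, Finset.mem_univ j, mul_pos ((hA0 i j).lt_of_ne (Ne.symm hj)) (hq j)⟩

lemma descent {m M : ℕ} (A : Fin m → Fin M → ℝ) (b : Fin m → ℝ)
    (hA0 : ∀ i j, 0 ≤ A i j) (hArow : ∀ i, ∃ j, A i j ≠ 0)
    (hAcol : ∀ j, ∑ i, A i j = 1) (hb0 : ∀ i, 0 < b i) (hbsum : ∑ i, b i = 1)
    (q : Fin M → ℝ) (hq : ∀ j, 0 < q j)
    (p : Fin M → ℝ) (hp0 : ∀ j, 0 ≤ p j) (hpA : ∀ i, ∑ j, A i j * p j = b i) :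
    KL p (gisStep A b q) + KL b (fun i => ∑ j, A i j * q j) ≤ KL p q := by
  set s : Fin m → ℝ := fun i => ∑ j', A i j' * q j' with hs_def
  have hs : ∀ i, 0 < s i := s_pos A hA0 hArow q hq
  set c : Fin M → ℝ := fun j => ∑ i, A i j * Real.log (b i / s i) with hc_def
  have hG : gisStep A b q = fun j => q j * Real.exp (c j) := rfl
  have hterm : ∀ j, p j * Real.log (p j / (q j * Real.exp (c j)))
      = p j * Real.log (p j / q j) - p j * c j := by
    intro j
    rcases eq_or_lt_of_le (hp0 j) with h | h
    · simp [← h]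
    · have hqe : q j * Real.exp (c j) ≠ 0 := (mul_pos (hq j) (Real.exp_pos _)).ne'
      rw [Real.log_div (ne_of_gt h) hqe, Real.log_mul (ne_of_gt (hq j)) (Real.exp_ne_zero _),
        Real.log_exp, Real.log_div (ne_of_gt h) (ne_of_gt (hq j))]
      ring
  have hKL : KL p (gisStep A b q)
      = KL p q - (∑ j, p j * c j) - (∑ j, q j) + ∑ j, q j * Real.exp (c j) := by
    rw [hG]
    unfold KL
    rw [← Finset.sum_sub_distrib, ← Finset.sum_sub_distrib, ← Finset.sum_add_distrib]
    refine Finset.sum_congr rfl fun j _ => ?_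
    rw [hterm j]; ring
  have hpc : ∑ j, p j * c j = ∑ i, b i * Real.log (b i / s i) := by
    simp only [hc_def, Finset.mul_sum]
    rw [Finset.sum_comm]
    refine Finset.sum_congr rfl fun i _ => ?_
    rw [← hpA i, Finset.sum_mul]
    exact Finset.sum_congr rfl fun j _ => by ring
  have hss : ∑ i, s i = ∑ j, q j := by
    simp only [hs_def]
    rw [Finset.sum_comm]
    refine Finset.sum_congr rfl fun j _ => ?_
    rw [← Finset.sum_mul, hAcol j, one_mul]
  have hKLbs : ∑ i, b i * Real.log (b i / s i) = KL b s + 1 - ∑ j, q j := by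
    unfold KL
    rw [← hss, ← hbsum, Finset.sum_add_distrib, Finset.sum_sub_distrib]
    ring
  have hD : ∑ j, q j * Real.exp (c j) ≤ 1 := by
    have h1 : ∀ j, Real.exp (c j) ≤ ∑ i, A i j * (b i / s i) := by
      intro j
      exact jensen_exp (fun i => A i j) (fun i => b i / s i) (fun i => hA0 i j)
        (hAcol j) (fun i => div_pos (hb0 i) (hs i))
    calc ∑ j, q j * Real.exp (c j)
        ≤ ∑ j, q j * ∑ i, A i j * (b i / s i) :=
          Finset.sum_le_sum fun j _ => mul_le_mul_of_nonneg_left (h1 j) (hq j).le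
      _ = ∑ i, (b i / s i) * s i := by
          simp only [Finset.mul_sum, hs_def]
          rw [Finset.sum_comm]
          exact Finset.sum_congr rfl fun i _ =>
            Finset.sum_congr rfl fun j _ => by ring
      _ = ∑ i, b i := Finset.sum_congr rfl fun i _ => div_mul_cancel₀ _ (ne_of_gt (hs i))
      _ = 1 := hbsum
  have hKLbs' : KL b (fun i => ∑ j, A i j * q j) = KL b s := rfl
  rw [hKL, hpc, hKLbs, hKLbs']
  linarith

/-- Fejér monotonicity of the GIS sequence with respect to `C(A,b)`, and
summability of the constraint violations: for every `p ∈ C(A,b)`,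
`k ↦ KL(p, p⁽ᵏ⁾)` is nonincreasing, `∑ₖ KL(b, A p⁽ᵏ⁾) ≤ KL(p, q) < ∞`, and
in particular `KL(b, A p⁽ᵏ⁾) → 0`. -/
theorem stmt3 {m M : ℕ} (A : Fin m → Fin M → ℝ) (b : Fin m → ℝ)
    (hA0 : ∀ i j, 0 ≤ A i j)
    (hArow : ∀ i, ∃ j, A i j ≠ 0)
    (hAcol : ∀ j, ∑ i, A i j = 1)
    (hb0 : ∀ i, 0 < b i)
    (hbsum : ∑ i, b i = 1)
    (q : Fin M → ℝ) (hq : ∀ j, 0 < q j)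
    (C : Set (Fin M → ℝ))
    (hC : C = {x : Fin M → ℝ |
      (∀ j, 0 ≤ x j) ∧ (∑ j, x j = 1) ∧ ∀ i, ∑ j, A i j * x j = b i})
    (hCne : C.Nonempty) :
    ∀ p ∈ C,
      (∀ k : ℕ,
        KL p ((gisStep A b)^[k + 1] q) ≤ KL p ((gisStep A b)^[k] q)) ∧
      Summable (fun k : ℕ =>
        KL b (fun i => ∑ j, A i j * ((gisStep A b)^[k] q) j)) ∧
      (∑' k : ℕ, KL b (fun i => ∑ j, A i j * ((gisStep A b)^[k] q) j))
        ≤ KL p q ∧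
      Tendsto (fun k : ℕ =>
          KL b (fun i => ∑ j, A i j * ((gisStep A b)^[k] q) j))
        atTop (𝓝 0) := by
  intro p hp
  rw [hC] at hp
  obtain ⟨hp0, hpsum, hpA⟩ := hp
  have hQpos : ∀ k j, 0 < (gisStep A b)^[k] q j := by
    intro k
    induction k with
    | zero => simpa using hq
    | succ n ih =>
      intro j
      rw [Function.iterate_succ_apply']
      exact mul_pos (ih j) (Real.exp_pos _)
  have hstep : ∀ k, KL p ((gisStep A b)^[k + 1] q)
      + KL b (fun i => ∑ j, A i j * ((gisStep A b)^[k] q) j)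
      ≤ KL p ((gisStep A b)^[k] q) := by
    intro k
    rw [Function.iterate_succ_apply']
    exact descent A b hA0 hArow hAcol hb0 hbsum _ (hQpos k) p hp0 hpA
  have hE0 : ∀ k, 0 ≤ KL b (fun i => ∑ j, A i j * ((gisStep A b)^[k] q) j) :=
    fun k => KL_nonneg _ _ (fun i => (hb0 i).le)
      (fun i => s_pos A hA0 hArow _ (hQpos k) i)
  have hD0 : ∀ k, 0 ≤ KL p ((gisStep A b)^[k] q) :=
    fun k => KL_nonneg _ _ hp0 (hQpos k)
  have hpartial : ∀ n, (∑ k ∈ Finset.range n,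
      KL b (fun i => ∑ j, A i j * ((gisStep A b)^[k] q) j)) ≤ KL p q := by
    intro n
    have key : (∑ k ∈ Finset.range n,
        KL b (fun i => ∑ j, A i j * ((gisStep A b)^[k] q) j))
        + KL p ((gisStep A b)^[n] q) ≤ KL p q := by
      induction n with
      | zero => simp
      | succ n ih =>
        rw [Finset.sum_range_succ]
        linarith [hstep n]
    linarith [hD0 n]
  have hsummable : Summable (fun k : ℕ =>
      KL b (fun i => ∑ j, A i j * ((gisStep A b)^[k] q) j)) :=
    summable_of_sum_range_le hE0 hpartial
  exact ⟨fun k => le_trans (le_add_of_nonneg_right (hE0 k)) (hstep k),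
    hsummable, Real.tsum_le_of_sum_range_le hE0 hpartial,
    hsummable.tendsto_atTop_zero⟩
end

section
/- Fix points x_1,…,x_M ∈ ℝ^d, weights μ ∈ ℝ^M with positive entries and Σ_i μ_i = 1, and ν ∈ ℝ^M with nonnegative entries and Σ_j ν_j = 1. Let c : ℝ^d × ℝ^d → ℝ be strictly convex in its second argument. Then: (i) the vector of barycentric means of optimal plans for V(μ, ν) is unique, i.e., any two minimizers π, π' of π ↦ Σ_i μ_i·c(x_i, (1/μ_i)·Σ_j π_{ij}x_j) over Π(μ,ν) satisfy (1/μ_i)·Σ_j π_{ij}x_j = (1/μ_i)·Σ_j π'_{ij}x_j =: m̂_i for all i; (ii) under the assumptions that U ⊆ ℝ^d is open containing the convex hull of {x_1,…,x_M}, Y_n ⊂ ℝ^d are finite sets with U contained in the convex hull of Y_n for all n and sup_{a∈U} min_{y∈Y_n} ‖a − y‖ → 0, and (π̂^{x,n}, π̂^{y,n}) are optimal solutions of the relaxed problem with respect to Y_n with means m̂_i^n := (1/μ_i)·Σ_j π̂^{x,n}_{ij}x_j, it holds that lim_{n→∞} m̂_i^n = m̂_i for every i = 1,…,M. -/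
/-!
(i) The barycentric means depend linearly on the plan and the cost is strictly convex in the
mean, so the average of two optimal plans whose means differ would be strictly cheaper.

(ii) By Jensen's inequality the weak cost of `πx n` is at most its relaxed cost. Conversely, once
the grid is `ε`-dense near a point `m`, `m` is a convex combination of grid points within `3ε` of
it: otherwise, for a unit normal `u` of a hyperplane separating `m` from these points, a grid point
`ε`-close to `m + 2ε u` would be one of them on the wrong side. So for an optimal `π` the relaxed
optimum is at most `weakCost π + o(1)`. Hence the weak costs of `πx n`
tend to the optimal value; every cluster point of `πx n` in the compact set of couplings is then
optimal, and (i) identifies its means.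
-/

open Filter Topology

/-- The set of couplings of `μ` and `ν`. -/
def PiSet {M : ℕ} (μ ν : Fin M → ℝ) : Set (Fin M → Fin M → ℝ) :=
  {π | (∀ i j, 0 ≤ π i j) ∧ (∀ i, ∑ j, π i j = μ i) ∧ (∀ j, ∑ i, π i j = ν j)}

/-- The barycentric weak OT objective. -/
noncomputable def weakCost {d M : ℕ} (x : Fin M → EuclideanSpace ℝ (Fin d))
    (μ : Fin M → ℝ)
    (c : EuclideanSpace ℝ (Fin d) → EuclideanSpace ℝ (Fin d) → ℝ)
    (π : Fin M → Fin M → ℝ) : ℝ :=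
  ∑ i, μ i * c (x i) ((μ i)⁻¹ • ∑ j, π i j • x j)

noncomputable def barycentricMean {E : Type*} [AddCommGroup E] [Module ℝ E] {M : ℕ}
    (x : Fin M → E) (μ : Fin M → ℝ) (π : Fin M → Fin M → ℝ) (i : Fin M) : E :=
  (μ i)⁻¹ • ∑ j, π i j • x j

section Couplings

variable {M : ℕ} {μ ν : Fin M → ℝ}

lemma isCompact_piSet (μ ν : Fin M → ℝ) : IsCompact (PiSet μ ν) := by
  have hclosed : IsClosed (PiSet μ ν) := by
    simp only [PiSet, Set.ofPred_and, Set.ofPred_forall]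
    refine .inter (isClosed_iInter fun i => isClosed_iInter fun j => ?_)
      (.inter (isClosed_iInter fun i => ?_) (isClosed_iInter fun j => ?_))
    · exact isClosed_le continuous_const (by fun_prop)
    · exact isClosed_eq (by fun_prop) continuous_const
    · exact isClosed_eq (by fun_prop) continuous_const
  refine (isCompact_Icc (a := 0) (b := fun i _ => μ i)).of_isClosed_subset hclosed ?_
  rintro π ⟨hnonneg, hrow, -⟩
  refine ⟨fun i j => hnonneg i j, fun i j => ?_⟩
  change π i j ≤ μ i
  rw [← hrow i]
  exact Finset.single_le_sum (fun j _ => hnonneg i j) (Finset.mem_univ j)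

lemma convex_piSet (μ ν : Fin M → ℝ) : Convex ℝ (PiSet μ ν) := by
  rintro π ⟨hπ₀, hπr, hπc⟩ π' ⟨hπ'₀, hπ'r, hπ'c⟩ a b ha hb hab
  refine ⟨fun i j => ?_, fun i => ?_, fun j => ?_⟩
  · simp only [Pi.add_apply, Pi.smul_apply, smul_eq_mul]
    exact add_nonneg (mul_nonneg ha (hπ₀ i j)) (mul_nonneg hb (hπ'₀ i j))
  · simp [Finset.sum_add_distrib, ← Finset.mul_sum, hπr, hπ'r, ← add_mul, hab]
  · simp [Finset.sum_add_distrib, ← Finset.mul_sum, hπc, hπ'c, ← add_mul, hab]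

end Couplings

section BarycentricMean

variable {E : Type*} [AddCommGroup E] [Module ℝ E] {M : ℕ} (x : Fin M → E) (μ : Fin M → ℝ)

lemma barycentricMean_smul_add_smul (π π' : Fin M → Fin M → ℝ) (a b : ℝ) (i : Fin M) :
    barycentricMean x μ (a • π + b • π') i =
      a • barycentricMean x μ π i + b • barycentricMean x μ π' i := by
  simp only [barycentricMean, Pi.add_apply, Pi.smul_apply, smul_eq_mul, add_smul, mul_smul,
    Finset.sum_add_distrib, ← Finset.smul_sum, smul_add]
  rw [smul_comm a, smul_comm b]

lemma smul_barycentricMean {i : Fin M} (hμ : μ i ≠ 0) (π : Fin M → Fin M → ℝ) :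
    μ i • barycentricMean x μ π i = ∑ j, π i j • x j :=
  smul_inv_smul₀ hμ _

lemma barycentricMean_mem_convexHull {ν : Fin M → ℝ} {π : Fin M → Fin M → ℝ}
    (hπ : π ∈ PiSet μ ν) {i : Fin M} (hμ : 0 < μ i) :
    barycentricMean x μ π i ∈ convexHull ℝ (Set.range x) := by
  have h := Finset.univ.centerMass_mem_convexHull (fun j _ => hπ.1 i j)
    (by rwa [hπ.2.1 i]) (fun j _ => Set.mem_range_self (f := x) j)
  rwa [Finset.centerMass, hπ.2.1 i] at h

lemma continuous_barycentricMean [TopologicalSpace E] [IsTopologicalAddGroup E]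
    [ContinuousSMul ℝ E] (i : Fin M) :
    Continuous fun π => barycentricMean x μ π i := by
  unfold barycentricMean
  fun_prop

end BarycentricMean

section WeakCost

variable {d M : ℕ} {x : Fin M → EuclideanSpace ℝ (Fin d)} {μ ν : Fin M → ℝ}
  {c : EuclideanSpace ℝ (Fin d) → EuclideanSpace ℝ (Fin d) → ℝ}

lemma weakCost_eq_sum_barycentricMean (π : Fin M → Fin M → ℝ) :
    weakCost x μ c π = ∑ i, μ i * c (x i) (barycentricMean x μ π i) :=
  rfl

lemma continuous_weakCost (hc : ∀ i, Continuous (c (x i))) : Continuous (weakCost x μ c) := by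
  simp only [funext weakCost_eq_sum_barycentricMean]
  have := continuous_barycentricMean x μ
  fun_prop

lemma weakCost_smul_add_smul_lt (hμ : ∀ i, 0 < μ i) (hc : ∀ a, StrictConvexOn ℝ Set.univ (c a))
    {π π' : Fin M → Fin M → ℝ} {i₀ : Fin M}
    (hne : barycentricMean x μ π i₀ ≠ barycentricMean x μ π' i₀)
    {a b : ℝ} (ha : 0 < a) (hb : 0 < b) (hab : a + b = 1) :
    weakCost x μ c (a • π + b • π') < a * weakCost x μ c π + b * weakCost x μ c π' := by
  simp only [weakCost_eq_sum_barycentricMean, barycentricMean_smul_add_smul, Finset.mul_sum,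
    ← Finset.sum_add_distrib]
  refine Finset.sum_lt_sum (fun i _ => ?_) ⟨i₀, Finset.mem_univ _, ?_⟩
  · have := (hc (x i)).convexOn.2 (Set.mem_univ (barycentricMean x μ π i))
      (Set.mem_univ (barycentricMean x μ π' i)) ha.le hb.le hab
    simp only [smul_eq_mul] at this
    nlinarith [hμ i]
  · have := (hc (x i₀)).2 (Set.mem_univ _) (Set.mem_univ _) hne ha hb hab
    simp only [smul_eq_mul] at this
    nlinarith [hμ i₀]

lemma barycentricMean_eq_of_isMinOn (hμ : ∀ i, 0 < μ i)
    (hc : ∀ a, StrictConvexOn ℝ Set.univ (c a)) {π π' : Fin M → Fin M → ℝ}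
    (hπ : π ∈ PiSet μ ν) (hπmin : IsMinOn (weakCost x μ c) (PiSet μ ν) π)
    (hπ' : π' ∈ PiSet μ ν) (hπ'min : IsMinOn (weakCost x μ c) (PiSet μ ν) π') :
    barycentricMean x μ π = barycentricMean x μ π' := by
  by_contra hne
  obtain ⟨i, hi⟩ := Function.ne_iff.1 hne
  have hhalf : (0 : ℝ) < 2⁻¹ := by norm_num
  have hmid := convex_piSet μ ν hπ hπ' hhalf.le hhalf.le (by norm_num)
  have hlt := weakCost_smul_add_smul_lt hμ hc hi hhalf hhalf (by norm_num)
  have h₁ := isMinOn_iff.1 hπmin _ hmid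
  have h₂ := isMinOn_iff.1 hπmin _ hπ'
  have h₃ := isMinOn_iff.1 hπ'min _ hπ
  linarith

end WeakCost

lemma ConvexOn.sum_mul_map_inv_smul_sum_le {E ι : Type*} [AddCommGroup E] [Module ℝ E]
    {g : E → ℝ} (hg : ConvexOn ℝ Set.univ g) (t : Finset ι) {w : ι → ℝ}
    (hw : ∀ k ∈ t, 0 ≤ w k) (hpos : 0 < ∑ k ∈ t, w k) (p : ι → E) :
    (∑ k ∈ t, w k) * g ((∑ k ∈ t, w k)⁻¹ • ∑ k ∈ t, w k • p k) ≤ ∑ k ∈ t, w k * g (p k) := by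
  have h := hg.map_centerMass_le hw hpos fun k _ => Set.mem_univ (p k)
  simp only [Finset.centerMass, Function.comp_apply, smul_eq_mul] at h
  calc (∑ k ∈ t, w k) * g ((∑ k ∈ t, w k)⁻¹ • ∑ k ∈ t, w k • p k)
      ≤ (∑ k ∈ t, w k) * ((∑ k ∈ t, w k)⁻¹ * ∑ k ∈ t, w k * g (p k)) := by gcongr
    _ = ∑ k ∈ t, w k * g (p k) := mul_inv_cancel_left₀ hpos.ne' _

lemma exists_weights_of_mem_convexHull_range_inter {E ι : Type*} [AddCommGroup E] [Module ℝ E]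
    [Fintype ι] [DecidableEq ι] (y : ι → E) (T : Set E) {m : E}
    (hm : m ∈ convexHull ℝ (Set.range y ∩ T)) :
    ∃ w : ι → ℝ, (∀ k, 0 ≤ w k) ∧ ∑ k, w k = 1 ∧ ∑ k, w k • y k = m ∧
      ∀ k, w k ≠ 0 → y k ∈ T := by
  refine convexHull_min (t := {m | ∃ w : ι → ℝ, (∀ k, 0 ≤ w k) ∧ ∑ k, w k = 1 ∧
      ∑ k, w k • y k = m ∧ ∀ k, w k ≠ 0 → y k ∈ T}) ?_ ?_ hm
  · rintro _ ⟨⟨k, rfl⟩, hk⟩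
    refine ⟨Pi.single k 1, fun j => ?_, by simp, by simp, fun j hj => ?_⟩
    · rcases eq_or_ne j k with rfl | h <;> simp [*]
    · rcases eq_or_ne j k with rfl | h
      · exact hk
      · simp [h] at hj
  · rintro _ ⟨w, hw₀, hw₁, rfl, hwT⟩ _ ⟨w', hw₀', hw₁', rfl, hwT'⟩ a b ha hb hab
    refine ⟨a • w + b • w', fun k => ?_, ?_, ?_, fun k hk => ?_⟩
    · simp only [Pi.add_apply, Pi.smul_apply, smul_eq_mul]
      exact add_nonneg (mul_nonneg ha (hw₀ k)) (mul_nonneg hb (hw₀' k))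
    · simp [Finset.sum_add_distrib, ← Finset.mul_sum, hw₁, hw₁', hab]
    · simp [add_smul, mul_smul, Finset.sum_add_distrib, Finset.smul_sum]
    · by_contra hkT
      have h₁ : w k = 0 := not_ne_iff.1 (mt (hwT k) hkT)
      have h₂ : w' k = 0 := not_ne_iff.1 (mt (hwT' k) hkT)
      simp [h₁, h₂] at hk

section Grid

variable {E : Type*} [NormedAddCommGroup E] [InnerProductSpace ℝ E] [CompleteSpace E]

open Metric

lemma mem_convexHull_inter_closedBall_of_dense {S : Set E} (hS : S.Finite) {m : E} {ε : ℝ}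
    (hε : 0 ≤ ε) (hdense : ∀ a ∈ closedBall m (2 * ε), ∃ s ∈ S, dist a s ≤ ε) :
    m ∈ convexHull ℝ (S ∩ closedBall m (3 * ε)) := by
  by_contra hm
  obtain ⟨f, u, hfu, huf⟩ := geometric_hahn_banach_closed_point (convex_convexHull ℝ _)
    ((hS.inter_of_left _).isCompact_convexHull (𝕜 := ℝ)).isClosed hm
  set z := (InnerProductSpace.toDual ℝ E).symm f
  have hf : ∀ v, f v = inner ℝ z v := fun v => InnerProductSpace.toDual_symm_apply.symm
  have hzz : ‖z‖⁻¹ * ‖z‖ ≤ 1 := by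
    rcases eq_or_ne ‖z‖ 0 with h | h
    · simp [h]
    · rw [inv_mul_cancel₀ h]
  set a := m + (2 * ε * ‖z‖⁻¹) • z
  have ha : a ∈ closedBall m (2 * ε) := by
    rw [mem_closedBall, dist_eq_norm, add_sub_cancel_left, norm_smul, Real.norm_eq_abs,
      abs_of_nonneg (by positivity), mul_assoc]
    nlinarith
  have hfa : f a = f m + 2 * ε * ‖z‖ := by
    rw [map_add, map_smul, hf z, real_inner_self_eq_norm_sq, smul_eq_mul]
    rcases eq_or_ne ‖z‖ 0 with h | h
    · simp [h]
    · field_simp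
  obtain ⟨s, hsS, hsa⟩ := hdense a ha
  have hs : s ∈ S ∩ closedBall m (3 * ε) := by
    refine ⟨hsS, ?_⟩
    have := dist_triangle s a m
    rw [dist_comm] at hsa
    rw [mem_closedBall]
    linarith [mem_closedBall.1 ha]
  have hfs : f a - ε * ‖z‖ ≤ f s := by
    have h := real_inner_le_norm z (a - s)
    rw [← dist_eq_norm, inner_sub_right] at h
    rw [hf, hf]
    nlinarith [norm_nonneg z]
  have := hfu s (subset_convexHull ℝ _ hs)
  nlinarith [norm_nonneg z]

lemma eventually_exists_weights_le {U : Set E} (hU : IsOpen U) {m : E} (hm : m ∈ U)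
    {g : E → ℝ} (hg : ContinuousAt g m) {N : ℕ → ℕ} {y : (n : ℕ) → Fin (N n) → E}
    (hdist : ∀ ε > (0 : ℝ), ∃ n₀ : ℕ, ∀ n ≥ n₀, ∀ a ∈ U, ∃ k, ‖a - y n k‖ ≤ ε)
    {η : ℝ} (hη : 0 < η) :
    ∀ᶠ n in atTop, ∃ w : Fin (N n) → ℝ, (∀ k, 0 ≤ w k) ∧ ∑ k, w k = 1 ∧
      ∑ k, w k • y n k = m ∧ ∑ k, w k * g (y n k) ≤ g m + η := by
  classical
  obtain ⟨δ, hδ, hgδ⟩ := Metric.eventually_nhds_iff.1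
    (hg.eventually (gt_mem_nhds (lt_add_of_pos_right (g m) hη)))
  obtain ⟨r, hr, hrU⟩ := isOpen_iff.1 hU m hm
  obtain ⟨ε, hε, hεδ, hεr⟩ : ∃ ε > 0, 3 * ε < δ ∧ 2 * ε < r :=
    ⟨min δ r / 4, by positivity, by linarith [min_le_left δ r], by linarith [min_le_right δ r]⟩
  obtain ⟨n₀, hn₀⟩ := hdist ε hε
  filter_upwards [eventually_ge_atTop n₀] with n hn
  have hmem := mem_convexHull_inter_closedBall_of_dense (Set.finite_range (y n)) hε.le
    fun a ha => by
      obtain ⟨k, hk⟩ := hn₀ n hn a (hrU (closedBall_subset_ball hεr ha))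
      exact ⟨y n k, Set.mem_range_self k, by rwa [dist_eq_norm]⟩
  obtain ⟨w, hw₀, hw₁, hwm, hwT⟩ := exists_weights_of_mem_convexHull_range_inter (y n) _ hmem
  refine ⟨w, hw₀, hw₁, hwm, ?_⟩
  calc ∑ k, w k * g (y n k) ≤ ∑ k, w k * (g m + η) := by
        refine Finset.sum_le_sum fun k _ => ?_
        rcases eq_or_ne (w k) 0 with h | h
        · simp [h]
        · refine mul_le_mul_of_nonneg_left (hgδ ?_).le (hw₀ k)
          exact (mem_closedBall.1 (hwT k h)).trans_lt hεδ
    _ = g m + η := by rw [← Finset.sum_mul, hw₁, one_mul]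

end Grid

section Relaxed

variable {d M : ℕ} {x : Fin M → EuclideanSpace ℝ (Fin d)} {μ ν : Fin M → ℝ}
  {c : EuclideanSpace ℝ (Fin d) → EuclideanSpace ℝ (Fin d) → ℝ}

lemma weakCost_le_relaxedCost (hμ : ∀ i, 0 < μ i) (hc : ∀ a, ConvexOn ℝ Set.univ (c a))
    {N : ℕ} {y : Fin N → EuclideanSpace ℝ (Fin d)} {πx : Fin M → Fin M → ℝ}
    {πy : Fin M → Fin N → ℝ} (hπy : ∀ i k, 0 ≤ πy i k) (hrow : ∀ i, ∑ k, πy i k = μ i)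
    (hbary : ∀ i, ∑ j, πx i j • x j = ∑ k, πy i k • y k) :
    weakCost x μ c πx ≤ ∑ i, ∑ k, πy i k * c (x i) (y k) := by
  refine Finset.sum_le_sum fun i _ => ?_
  have h := (hc (x i)).sum_mul_map_inv_smul_sum_le Finset.univ (fun k _ => hπy i k)
    (by rw [hrow i]; exact hμ i) y
  rwa [hrow i, ← hbary i] at h

lemma eventually_relaxedCost_le (hμ : ∀ i, 0 < μ i) (hμs : ∑ i, μ i = 1)
    (hc : ∀ i, Continuous (c (x i))) {U : Set (EuclideanSpace ℝ (Fin d))} (hU : IsOpen U)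
    {N : ℕ → ℕ} {y : (n : ℕ) → Fin (N n) → EuclideanSpace ℝ (Fin d)}
    (hdist : ∀ ε > (0 : ℝ), ∃ n₀ : ℕ, ∀ n ≥ n₀, ∀ a ∈ U, ∃ k, ‖a - y n k‖ ≤ ε)
    {πy : (n : ℕ) → Fin M → Fin (N n) → ℝ}
    (hopt : ∀ n, ∀ (σx : Fin M → Fin M → ℝ) (σy : Fin M → Fin (N n) → ℝ),
      σx ∈ PiSet μ ν → (∀ i k, 0 ≤ σy i k) → (∀ i, ∑ k, σy i k = μ i) →
      (∀ i, ∑ j, σx i j • x j = ∑ k, σy i k • y n k) →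
      ∑ i, ∑ k, πy n i k * c (x i) (y n k) ≤ ∑ i, ∑ k, σy i k * c (x i) (y n k))
    {π : Fin M → Fin M → ℝ} (hπ : π ∈ PiSet μ ν) (hπU : ∀ i, barycentricMean x μ π i ∈ U)
    {η : ℝ} (hη : 0 < η) :
    ∀ᶠ n in atTop, ∑ i, ∑ k, πy n i k * c (x i) (y n k) ≤ weakCost x μ c π + η := by
  have hweights := fun i =>
    eventually_exists_weights_le hU (hπU i) (hc i).continuousAt hdist hη
  filter_upwards [eventually_all.2 hweights] with n hw
  choose w hw₀ hw₁ hwm hwc using hw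
  have hbary : ∀ i, ∑ j, π i j • x j = ∑ k, (μ i * w i k) • y n k := by
    intro i
    simp only [mul_smul, ← Finset.smul_sum, hwm, smul_barycentricMean x μ (hμ i).ne']
  calc ∑ i, ∑ k, πy n i k * c (x i) (y n k)
      ≤ ∑ i, ∑ k, (μ i * w i k) * c (x i) (y n k) :=
        hopt n π _ hπ (fun i k => mul_nonneg (hμ i).le (hw₀ i k))
          (fun i => by rw [← Finset.mul_sum, hw₁, mul_one]) hbary
    _ = ∑ i, μ i * ∑ k, w i k * c (x i) (y n k) := by
        simp only [Finset.mul_sum, mul_assoc]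
    _ ≤ ∑ i, μ i * (c (x i) (barycentricMean x μ π i) + η) :=
        Finset.sum_le_sum fun i _ => mul_le_mul_of_nonneg_left (hwc i) (hμ i).le
    _ = weakCost x μ c π + η := by
        simp only [mul_add, Finset.sum_add_distrib, ← Finset.sum_mul, hμs, one_mul]
        rfl

end Relaxed

lemma IsCompact.tendsto_of_tendsto_isMinOn {X Y Z : Type*} [TopologicalSpace X]
    [FirstCountableTopology X] [TopologicalSpace Y] [TopologicalSpace Z] [Preorder Z]
    [T2Space Z] {K : Set X} (hK : IsCompact K) {f : X → Z} (hf : Continuous f)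
    {g : X → Y} (hg : Continuous g) {p : X} (hp : IsMinOn f K p) {b : Y}
    (hb : ∀ q ∈ K, IsMinOn f K q → g q = b) {u : ℕ → X} (hu : ∀ n, u n ∈ K)
    (hfu : Tendsto (fun n => f (u n)) atTop (𝓝 (f p))) :
    Tendsto (fun n => g (u n)) atTop (𝓝 b) := by
  refine tendsto_of_subseq_tendsto fun ns hns => ?_
  obtain ⟨q, hqK, φ, hφ, hlim⟩ := hK.tendsto_subseq fun n => hu (ns n)
  have hfq : f q = f p :=
    tendsto_nhds_unique ((hf.tendsto q).comp hlim) (hfu.comp (hns.comp hφ.tendsto_atTop))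
  have hq : IsMinOn f K q := fun σ hσ => hfq ▸ hp hσ
  exact ⟨φ, hb q hqK hq ▸ (hg.tendsto q).comp hlim⟩

theorem stmt14_general {d M : ℕ}
    (x : Fin M → EuclideanSpace ℝ (Fin d))
    (μ ν : Fin M → ℝ) (hμ : ∀ i, 0 < μ i) (hμs : ∑ i, μ i = 1)
    (c : EuclideanSpace ℝ (Fin d) → EuclideanSpace ℝ (Fin d) → ℝ)
    (hc : ∀ a, StrictConvexOn ℝ Set.univ (c a))
    (U : Set (EuclideanSpace ℝ (Fin d))) (hUopen : IsOpen U)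
    (hXU : convexHull ℝ (Set.range x) ⊆ U)
    (N : ℕ → ℕ) (y : (n : ℕ) → Fin (N n) → EuclideanSpace ℝ (Fin d))
    (hdist : ∀ ε > (0 : ℝ), ∃ n₀ : ℕ, ∀ n ≥ n₀, ∀ a ∈ U, ∃ k, ‖a - y n k‖ ≤ ε)
    (πx : (n : ℕ) → Fin M → Fin M → ℝ)
    (πy : (n : ℕ) → Fin M → Fin (N n) → ℝ)
    (hfeas : ∀ n, πx n ∈ PiSet μ ν ∧ (∀ i k, 0 ≤ πy n i k) ∧
      (∀ i, ∑ k, πy n i k = μ i) ∧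
      (∀ i, ∑ j, πx n i j • x j = ∑ k, πy n i k • y n k))
    (hopt : ∀ n, ∀ (σx : Fin M → Fin M → ℝ) (σy : Fin M → Fin (N n) → ℝ),
      σx ∈ PiSet μ ν → (∀ i k, 0 ≤ σy i k) → (∀ i, ∑ k, σy i k = μ i) →
      (∀ i, ∑ j, σx i j • x j = ∑ k, σy i k • y n k) →
      ∑ i, ∑ k, πy n i k * c (x i) (y n k) ≤
        ∑ i, ∑ k, σy i k * c (x i) (y n k)) :
    -- (i) uniqueness of the optimal barycentric means:
    (∀ π π', π ∈ PiSet μ ν → (∀ σ ∈ PiSet μ ν, weakCost x μ c π ≤ weakCost x μ c σ) →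
      π' ∈ PiSet μ ν → (∀ σ ∈ PiSet μ ν, weakCost x μ c π' ≤ weakCost x μ c σ) →
      ∀ i, (μ i)⁻¹ • ∑ j, π i j • x j = (μ i)⁻¹ • ∑ j, π' i j • x j) ∧
    -- (ii) convergence of the relaxed means to the optimal means:
    (∀ π, π ∈ PiSet μ ν → (∀ σ ∈ PiSet μ ν, weakCost x μ c π ≤ weakCost x μ c σ) →
      ∀ i, Tendsto (fun n => (μ i)⁻¹ • ∑ j, πx n i j • x j) atTop
        (𝓝 ((μ i)⁻¹ • ∑ j, π i j • x j))) := by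
  have hunique {π π'} (hπ : π ∈ PiSet μ ν) (hπmin : IsMinOn (weakCost x μ c) (PiSet μ ν) π)
      (hπ' : π' ∈ PiSet μ ν) (hπ'min : IsMinOn (weakCost x μ c) (PiSet μ ν) π') :=
    barycentricMean_eq_of_isMinOn hμ hc hπ hπmin hπ' hπ'min
  refine ⟨fun π π' hπ hπmin hπ' hπ'min => congrFun (hunique hπ hπmin hπ' hπ'min),
    fun π hπ hπmin i => ?_⟩
  have hcont : ∀ a, Continuous (c a) := fun a =>
    continuousOn_univ.1 ((hc a).convexOn.continuousOn isOpen_univ)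
  have hπU : ∀ i, barycentricMean x μ π i ∈ U := fun i =>
    hXU (barycentricMean_mem_convexHull x μ hπ (hμ i))
  have hcost : Tendsto (fun n => weakCost x μ c (πx n)) atTop (𝓝 (weakCost x μ c π)) := by
    refine tendsto_order.2 ⟨fun a ha => .of_forall fun n => ha.trans_le (hπmin _ (hfeas n).1),
      fun a ha => ?_⟩
    filter_upwards [eventually_relaxedCost_le hμ hμs (fun i => hcont (x i)) hUopen hdist hopt
      hπ hπU (half_pos (sub_pos.2 ha))] with n hn
    have hlow := weakCost_le_relaxedCost hμ (fun a => (hc a).convexOn) (hfeas n).2.1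
      (hfeas n).2.2.1 (hfeas n).2.2.2
    linarith
  exact (isCompact_piSet μ ν).tendsto_of_tendsto_isMinOn
    (continuous_weakCost fun i => hcont (x i)) (continuous_barycentricMean x μ i) hπmin
    (fun q hq hqmin => congrFun (hunique hq hqmin hπ hπmin) i) (fun n => (hfeas n).1) hcost

/-- For strictly convex costs: (i) the barycentric means of optimal weak OT
plans are unique; (ii) the means of the optimal relaxed plans converge to
these optimal means as the grids `Yₙ` become dense. -/
theorem stmt14 {d M : ℕ}
    (x : Fin M → EuclideanSpace ℝ (Fin d))
    (μ ν : Fin M → ℝ) (hμ : ∀ i, 0 < μ i) (hμs : ∑ i, μ i = 1)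
    (hν : ∀ j, 0 ≤ ν j) (hνs : ∑ j, ν j = 1)
    (c : EuclideanSpace ℝ (Fin d) → EuclideanSpace ℝ (Fin d) → ℝ)
    (hc : ∀ a, StrictConvexOn ℝ Set.univ (c a))
    (U : Set (EuclideanSpace ℝ (Fin d))) (hUopen : IsOpen U)
    (hXU : convexHull ℝ (Set.range x) ⊆ U)
    (N : ℕ → ℕ) (y : (n : ℕ) → Fin (N n) → EuclideanSpace ℝ (Fin d))
    (hUY : ∀ n, U ⊆ convexHull ℝ (Set.range (y n)))
    (hdist : ∀ ε > (0 : ℝ), ∃ n₀ : ℕ, ∀ n ≥ n₀, ∀ a ∈ U, ∃ k, ‖a - y n k‖ ≤ ε)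
    (πx : (n : ℕ) → Fin M → Fin M → ℝ)
    (πy : (n : ℕ) → Fin M → Fin (N n) → ℝ)
    (hfeas : ∀ n, πx n ∈ PiSet μ ν ∧ (∀ i k, 0 ≤ πy n i k) ∧
      (∀ i, ∑ k, πy n i k = μ i) ∧
      (∀ i, ∑ j, πx n i j • x j = ∑ k, πy n i k • y n k))
    (hopt : ∀ n, ∀ (σx : Fin M → Fin M → ℝ) (σy : Fin M → Fin (N n) → ℝ),
      σx ∈ PiSet μ ν → (∀ i k, 0 ≤ σy i k) → (∀ i, ∑ k, σy i k = μ i) →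
      (∀ i, ∑ j, σx i j • x j = ∑ k, σy i k • y n k) →
      ∑ i, ∑ k, πy n i k * c (x i) (y n k) ≤
        ∑ i, ∑ k, σy i k * c (x i) (y n k)) :
    -- (i) uniqueness of the optimal barycentric means:
    (∀ π π', π ∈ PiSet μ ν → (∀ σ ∈ PiSet μ ν, weakCost x μ c π ≤ weakCost x μ c σ) →
      π' ∈ PiSet μ ν → (∀ σ ∈ PiSet μ ν, weakCost x μ c π' ≤ weakCost x μ c σ) →
      ∀ i, (μ i)⁻¹ • ∑ j, π i j • x j = (μ i)⁻¹ • ∑ j, π' i j • x j) ∧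
    -- (ii) convergence of the relaxed means to the optimal means:
    (∀ π, π ∈ PiSet μ ν → (∀ σ ∈ PiSet μ ν, weakCost x μ c π ≤ weakCost x μ c σ) →
      ∀ i, Tendsto (fun n => (μ i)⁻¹ • ∑ j, πx n i j • x j) atTop
        (𝓝 ((μ i)⁻¹ • ∑ j, π i j • x j))) :=
  stmt14_general x μ ν hμ hμs c hc U hUopen hXU N y hdist πx πy hfeas hopt
end

section
/- Fix points x_1,…,x_M ∈ ℝ^d and y_1,…,y_N ∈ ℝ^d, weights μ ∈ ℝ^M with positive entries and Σ_i μ_i = 1, and ν ∈ ℝ^M with nonnegative entries and Σ_j ν_j = 1. Let c : ℝ^d × ℝ^d → ℝ be convex in its second argument. Then for every feasible pair (π^x, π^y) of the relaxed problem with respect to Y = {y_1,…,y_N}, the Jensen inequality Σ_{i=1}^M μ_i·c(x_i, (1/μ_i)·Σ_{j=1}^M π^x_{ij}·x_j) ≤ Σ_{i=1}^M Σ_{k=1}^N π^y_{ik}·c(x_i, y_k) holds. In particular, V(μ, ν) is less than or equal to the optimal value of the relaxed problem. -/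
open Finset

theorem Finset.inv_smul_sum_eq_centerMass {E ι : Type*} [AddCommGroup E] [Module ℝ E]
    {t : Finset ι} {w : ι → ℝ} {p : ι → E} {m : ℝ} (hw : ∑ i ∈ t, w i = m) :
    m⁻¹ • ∑ i ∈ t, w i • p i = t.centerMass w p := by
  rw [Finset.centerMass, hw]

theorem ConvexOn.sum_mul_map_centerMass_le {E ι : Type*} [AddCommGroup E] [Module ℝ E]
    {s : Set E} {f : E → ℝ} (hf : ConvexOn ℝ s f) {t : Finset ι} {w : ι → ℝ} {p : ι → E}
    (hw : ∀ i ∈ t, 0 ≤ w i) (hpos : 0 < ∑ i ∈ t, w i) (hp : ∀ i ∈ t, p i ∈ s) :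
    (∑ i ∈ t, w i) * f (t.centerMass w p) ≤ ∑ i ∈ t, w i * f (p i) :=
  calc (∑ i ∈ t, w i) * f (t.centerMass w p)
      ≤ (∑ i ∈ t, w i) * t.centerMass w (f ∘ p) :=
        mul_le_mul_of_nonneg_left (hf.map_centerMass_le hw hpos hp) hpos.le
    _ = ∑ i ∈ t, w i * f (p i) := by
        rw [Finset.centerMass, smul_eq_mul, mul_inv_cancel_left₀ hpos.ne']
        rfl

theorem ConvexOn.bddBelow_image_convexHull {E : Type*} [NormedAddCommGroup E]
    [NormedSpace ℝ E] [FiniteDimensional ℝ E] {f : E → ℝ} (hf : ConvexOn ℝ Set.univ f)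
    {s : Set E} (hs : s.Finite) : BddBelow (f '' convexHull ℝ s) :=
  (hs.isCompact_convexHull (𝕜 := ℝ)).bddBelow_image
    ((hf.continuousOn isOpen_univ).mono (Set.subset_univ _))

section BarycentricCost

variable {E : Type*} [NormedAddCommGroup E] [NormedSpace ℝ E] {M : ℕ}

noncomputable def barycentricCost (μ : Fin M → ℝ) (x : Fin M → E) (c : E → E → ℝ)
    (π : Fin M → Fin M → ℝ) : ℝ :=
  ∑ i, μ i * c (x i) ((μ i)⁻¹ • ∑ j, π i j • x j)

theorem bddBelow_barycentricCost_image_piSet [FiniteDimensional ℝ E] {μ ν : Fin M → ℝ}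
    (hμ : ∀ i, 0 < μ i) (x : Fin M → E) {c : E → E → ℝ}
    (hc : ∀ a, ConvexOn ℝ Set.univ (c a)) :
    BddBelow (barycentricCost μ x c '' PiSet μ ν) := by
  choose m hm using fun i ↦ (hc (x i)).bddBelow_image_convexHull (Set.finite_range x)
  refine ⟨∑ i, μ i * m i, ?_⟩
  rintro _ ⟨π, ⟨hπ, hrow, -⟩, rfl⟩
  refine sum_le_sum fun i _ ↦ mul_le_mul_of_nonneg_left (hm i ⟨_, ?_, rfl⟩) (hμ i).le
  rw [inv_smul_sum_eq_centerMass (hrow i)]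
  exact centerMass_mem_convexHull _ (fun j _ ↦ hπ i j) (by rw [hrow i]; exact hμ i)
    fun j _ ↦ Set.mem_range_self j

end BarycentricCost

theorem stmt15_general {d M N : ℕ}
    (x : Fin M → EuclideanSpace ℝ (Fin d))
    (y : Fin N → EuclideanSpace ℝ (Fin d))
    (μ ν : Fin M → ℝ) (hμ : ∀ i, 0 < μ i)
    (c : EuclideanSpace ℝ (Fin d) → EuclideanSpace ℝ (Fin d) → ℝ)
    (hc : ∀ a, ConvexOn ℝ Set.univ (c a))
    (V : ℝ)
    (hV : V = sInf ((fun π : Fin M → Fin M → ℝ =>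
      ∑ i, μ i * c (x i) ((μ i)⁻¹ • ∑ j, π i j • x j)) '' PiSet μ ν)) :
    ∀ (πx : Fin M → Fin M → ℝ) (πy : Fin M → Fin N → ℝ),
      πx ∈ PiSet μ ν → (∀ i k, 0 ≤ πy i k) → (∀ i, ∑ k, πy i k = μ i) →
      (∀ i, ∑ j, πx i j • x j = ∑ k, πy i k • y k) →
      (∑ i, μ i * c (x i) ((μ i)⁻¹ • ∑ j, πx i j • x j) ≤
        ∑ i, ∑ k, πy i k * c (x i) (y k)) ∧
      V ≤ ∑ i, ∑ k, πy i k * c (x i) (y k) := by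
  intro πx πy hπx hπy hπy_row hbary
  have hjensen_row (i : Fin M) : μ i * c (x i) ((μ i)⁻¹ • ∑ j, πx i j • x j) ≤
      ∑ k, πy i k * c (x i) (y k) := by
    rw [hbary i, inv_smul_sum_eq_centerMass (hπy_row i), ← hπy_row i]
    exact (hc (x i)).sum_mul_map_centerMass_le (fun k _ ↦ hπy i k)
      (by rw [hπy_row i]; exact hμ i) fun _ _ ↦ trivial
  have hjensen : barycentricCost μ x c πx ≤ ∑ i, ∑ k, πy i k * c (x i) (y k) :=
    sum_le_sum fun i _ ↦ hjensen_row i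
  exact ⟨hjensen, hV ▸
    (csInf_le (bddBelow_barycentricCost_image_piSet hμ x hc) ⟨πx, hπx, rfl⟩).trans hjensen⟩

/-- The Jensen relaxation inequality for barycentric weak OT: for every
feasible pair `(πˣ, πʸ)` of the relaxed problem,
`∑ᵢ μᵢ c(xᵢ, (1/μᵢ)∑ⱼ πˣᵢⱼ xⱼ) ≤ ∑ᵢₖ πʸᵢₖ c(xᵢ, yₖ)`; in particular
`V(μ, ν)` is bounded by the relaxed value. -/
theorem stmt15 {d M N : ℕ}
    (x : Fin M → EuclideanSpace ℝ (Fin d))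
    (y : Fin N → EuclideanSpace ℝ (Fin d))
    (μ ν : Fin M → ℝ) (hμ : ∀ i, 0 < μ i) (hμs : ∑ i, μ i = 1)
    (hν : ∀ j, 0 ≤ ν j) (hνs : ∑ j, ν j = 1)
    (c : EuclideanSpace ℝ (Fin d) → EuclideanSpace ℝ (Fin d) → ℝ)
    (hc : ∀ a, ConvexOn ℝ Set.univ (c a))
    (V : ℝ)
    (hV : V = sInf ((fun π : Fin M → Fin M → ℝ =>
      ∑ i, μ i * c (x i) ((μ i)⁻¹ • ∑ j, π i j • x j)) '' PiSet μ ν)) :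
    ∀ (πx : Fin M → Fin M → ℝ) (πy : Fin M → Fin N → ℝ),
      πx ∈ PiSet μ ν → (∀ i k, 0 ≤ πy i k) → (∀ i, ∑ k, πy i k = μ i) →
      (∀ i, ∑ j, πx i j • x j = ∑ k, πy i k • y k) →
      (∑ i, μ i * c (x i) ((μ i)⁻¹ • ∑ j, πx i j • x j) ≤
        ∑ i, ∑ k, πy i k * c (x i) (y k)) ∧
      V ≤ ∑ i, ∑ k, πy i k * c (x i) (y k) :=
  stmt15_general x y μ ν hμ c hc V hV
end
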